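/- arXiv:1903.11016 — 12 statements merged into one kernel-verified Lean document; each statement's English description precedes it below -/
import Mathlib

section
/- Let f : ℝ≥0 → ℝ≥0 be non-increasing with non-decreasing work, let C > 0, set γ := inf { q | f(q) ≤ C } and suppose f(γ) ≤ C. If S is a finite set with nonnegative speeds s_i (i ∈ S) whose sum σ(S) satisfies σ(S) ≥ (1/2) * γ * f(γ) / C, then f(σ(S)) ≤ 2 * C. -/
/-! If `γ ≤ σ`, antitonicity gives `f σ ≤ f γ ≤ C`. Otherwise monotonicity of the work gives
`σ f(σ) ≤ γ f(γ) ≤ 2 C σ`, the last step being the hypothesis on `σ`; dividing by `σ` yields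
`f σ ≤ 2 C`. Here `σ > 0` because `f γ > 0`: monotone work and `f γ = 0` would give `f q = 0` for all
`0 < q ≤ γ`, contradicting the minimality of `γ`. -/

open scoped NNReal

namespace NNReal

variable {f : ℝ≥0 → ℝ≥0}

theorem apply_eq_zero_of_monotone_mul_of_le (hwork : Monotone fun s => s * f s) {a b : ℝ≥0}
    (ha : 0 < a) (hab : a ≤ b) (hb : f b = 0) : f a = 0 := by
  have hwa : a * f a ≤ b * f b := hwork hab
  rw [hb, mul_zero, nonpos_iff_eq_zero, mul_eq_zero] at hwa
  exact hwa.resolve_left ha.ne'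

theorem pos_apply_sInf_of_monotone_mul (hwork : Monotone fun s => s * f s) {C : ℝ≥0}
    (hγ : 0 < sInf {q : ℝ≥0 | f q ≤ C}) : 0 < f (sInf {q : ℝ≥0 | f q ≤ C}) := by
  set γ := sInf {q : ℝ≥0 | f q ≤ C}
  refine pos_iff_ne_zero.2 fun hfγ => ?_
  have hhalf : f (γ / 2) = 0 :=
    apply_eq_zero_of_monotone_mul_of_le hwork (by positivity) (half_le_self γ) hfγ
  have hmem : γ / 2 ∈ {q : ℝ≥0 | f q ≤ C} := by simp [hhalf]
  exact (half_lt_self hγ.ne').not_ge (csInf_le (OrderBot.bddBelow _) hmem)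

theorem apply_le_two_mul_of_mul_apply_le {σ γ C : ℝ≥0} (hC : 0 < C) (hσpos : 0 < σ)
    (hwork : σ * f σ ≤ γ * f γ) (hσ : (1 / 2) * γ * f γ / C ≤ σ) : f σ ≤ 2 * C := by
  rw [div_le_iff₀ hC] at hσ
  have hγσ : γ * f γ ≤ σ * (2 * C) := by
    calc γ * f γ = 2 * ((1 / 2) * γ * f γ) := by ring
      _ ≤ 2 * (σ * C) := by gcongr
      _ = σ * (2 * C) := by ring
  exact le_of_mul_le_mul_left (hwork.trans hγσ) hσpos

end NNReal

theorem stmt_2_general {ι : Type*} (f : ℝ≥0 → ℝ≥0) (hf : Antitone f)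
    (hwork : Monotone fun s => s * f s)
    (C : ℝ≥0)
    (γ : ℝ≥0) (hγdef : γ = sInf {q : ℝ≥0 | f q ≤ C}) (hγ : f γ ≤ C)
    (S : Finset ι) (s : ι → ℝ≥0)
    (hσ : (1 / 2) * γ * f γ / C ≤ ∑ i ∈ S, s i) :
    f (∑ i ∈ S, s i) ≤ 2 * C := by
  set σ := ∑ i ∈ S, s i
  rcases le_or_gt γ σ with hγσ | hσγ
  · exact (hf hγσ).trans (hγ.trans (le_mul_of_one_le_left C.2 one_le_two))
  have hγpos : 0 < γ := σ.2.trans_lt hσγ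
  have hfγpos : 0 < f γ := by
    subst hγdef
    exact NNReal.pos_apply_sInf_of_monotone_mul hwork hγpos
  have hC : 0 < C := hfγpos.trans_le hγ
  have hσpos : 0 < σ := lt_of_lt_of_le (by positivity) hσ
  exact NNReal.apply_le_two_mul_of_mul_apply_le hC hσpos (hwork hσγ.le) hσ

theorem stmt_2 {ι : Type*} (f : ℝ≥0 → ℝ≥0) (hf : Antitone f)
    (hwork : Monotone fun s => s * f s)
    (C : ℝ≥0) (hC : 0 < C)
    (γ : ℝ≥0) (hγdef : γ = sInf {q : ℝ≥0 | f q ≤ C}) (hγ : f γ ≤ C)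
    (S : Finset ι) (s : ι → ℝ≥0)
    (hσ : (1 / 2) * γ * f γ / C ≤ ∑ i ∈ S, s i) :
    f (∑ i ∈ S, s i) ≤ 2 * C :=
  stmt_2_general f hf hwork C γ hγdef hγ S s hσ
end

section
/- Let g : [0,1] → ℝ≥0 be non-increasing and integrable, let A > 0 and α := 2e/(e-1). If g(θ) < A / ((α + 2θ - 2)) for all θ ∈ [0,1], then ∫₀¹ g(θ) dθ < A/2. Consequently, if ∫₀¹ g(θ) dθ ≥ A/2, then there exists θ ∈ [0,1] with g(θ) ≥ A / (α + 2θ - 2). -/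
/-! The bound `A / (α + 2θ - 2)` integrates over `[0, 1]` to `(A / 2) log (α / (α - 2))`, and
`α = 2e / (e - 1)` is exactly the value with `α / (α - 2) = e`, so the integral is `A / 2`.
A function lying strictly below it on `[0, 1]` therefore has integral strictly less than `A / 2`;
the second claim is the contrapositive. -/

open Real Set

theorem intervalIntegral_lt_of_lt_on {f g : ℝ → ℝ} {a b : ℝ} (hab : a < b)
    (hf : IntervalIntegrable f MeasureTheory.volume a b)
    (hg : IntervalIntegrable g MeasureTheory.volume a b) (hlt : ∀ x ∈ Ioo a b, f x < g x) :
    ∫ x in a..b, f x < ∫ x in a..b, g x := by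
  rw [← sub_pos, ← intervalIntegral.integral_sub hg hf]
  exact intervalIntegral.intervalIntegral_pos_of_pos_on (hg.sub hf)
    (fun x hx => sub_pos.2 (hlt x hx)) hab

theorem integral_inv_mul_add {c d : ℝ} (hc : 0 < c) (hd : 0 < d) :
    ∫ x in (0:ℝ)..1, (c * x + d)⁻¹ = c⁻¹ * log ((c + d) / d) := by
  have hzero : (0:ℝ) ∉ uIcc d (c + d) := by
    rw [uIcc_of_le (by linarith)]
    exact fun h => hd.not_ge h.1
  rw [intervalIntegral.integral_comp_mul_add (fun x => x⁻¹) hc.ne' d, mul_zero, zero_add, mul_one,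
    integral_inv hzero, smul_eq_mul]

theorem integral_div_affine_eq {α : ℝ} (hα : 2 < α) (A : ℝ) :
    ∫ θ in (0:ℝ)..1, A / (α + 2 * θ - 2) = A / 2 * log (α / (α - 2)) := by
  have hrw : (fun θ : ℝ => A / (α + 2 * θ - 2)) = fun θ => A * (2 * θ + (α - 2))⁻¹ := by
    funext θ; rw [div_eq_mul_inv]; ring_nf
  rw [hrw, intervalIntegral.integral_const_mul, integral_inv_mul_add two_pos (by linarith)]
  ring_nf

theorem two_lt_two_mul_div_sub_one {t : ℝ} (ht : 1 < t) : 2 < 2 * t / (t - 1) := by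
  rw [lt_div_iff₀ (by linarith)]; linarith

theorem two_mul_div_sub_one_div_sub_two {t : ℝ} (ht : 1 < t) :
    2 * t / (t - 1) / (2 * t / (t - 1) - 2) = t := by
  have : t - 1 ≠ 0 := by linarith
  field_simp
  ring

theorem stmt_3_general (g : ℝ → ℝ)
    (hint : IntervalIntegrable g MeasureTheory.volume 0 1)
    (A : ℝ) (α : ℝ) (hα : α = 2 * Real.exp 1 / (Real.exp 1 - 1)) :
    ((∀ θ ∈ Icc (0:ℝ) 1, g θ < A / (α + 2 * θ - 2)) →
      (∫ θ in (0:ℝ)..1, g θ) < A / 2) ∧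
    (A / 2 ≤ (∫ θ in (0:ℝ)..1, g θ) →
      ∃ θ ∈ Icc (0:ℝ) 1, A / (α + 2 * θ - 2) ≤ g θ) := by
  have he : 1 < exp 1 := one_lt_exp_iff.2 one_pos
  have hα2 : 2 < α := hα ▸ two_lt_two_mul_div_sub_one he
  have hbound : ∫ θ in (0:ℝ)..1, A / (α + 2 * θ - 2) = A / 2 := by
    rw [integral_div_affine_eq hα2, hα, two_mul_div_sub_one_div_sub_two he, log_exp, mul_one]
  have hbound_int : IntervalIntegrable (fun θ => A / (α + 2 * θ - 2)) MeasureTheory.volume 0 1 := by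
    refine ContinuousOn.intervalIntegrable (continuousOn_const.div (by fun_prop) ?_)
    intro θ hθ
    rw [uIcc_of_le zero_le_one] at hθ
    linarith [hθ.1]
  have key : (∀ θ ∈ Icc (0:ℝ) 1, g θ < A / (α + 2 * θ - 2)) → ∫ θ in (0:ℝ)..1, g θ < A / 2 :=
    fun hlt => hbound ▸ intervalIntegral_lt_of_lt_on zero_lt_one hint hbound_int
      fun θ hθ => hlt θ (Ioo_subset_Icc_self hθ)
  refine ⟨key, fun hge => ?_⟩
  by_contra! hbelow
  exact (key hbelow).not_ge hge

theorem stmt_3 (g : ℝ → ℝ) (hg : AntitoneOn g (Icc 0 1))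
    (hint : IntervalIntegrable g MeasureTheory.volume 0 1)
    (hg0 : ∀ θ ∈ Icc (0:ℝ) 1, 0 ≤ g θ)
    (A : ℝ) (hA : 0 < A) (α : ℝ) (hα : α = 2 * Real.exp 1 / (Real.exp 1 - 1)) :
    ((∀ θ ∈ Icc (0:ℝ) 1, g θ < A / (α + 2 * θ - 2)) →
      (∫ θ in (0:ℝ)..1, g θ) < A / 2) ∧
    (A / 2 ≤ (∫ θ in (0:ℝ)..1, g θ) →
      ∃ θ ∈ Icc (0:ℝ) 1, A / (α + 2 * θ - 2) ≤ g θ) :=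
  stmt_3_general g hint A α hα
end

section
/- Let f : ℝ≥0 → ℝ≥0 be non-increasing with non-decreasing work, let C > 0, γ := critical speed with f(γ) ≤ C, and let T be a finite nonempty set of machines each with unit speed. If γ * f(γ) ≤ (|T| + 1) * C, then f(|T|) ≤ ((|T| + 1) / |T|) * C. -/
open scoped NNReal

theorem NNReal.apply_le_add_one_div_mul_of_work_le {f : ℝ≥0 → ℝ≥0} (hf : Antitone f)
    (hwork : Monotone fun s => s * f s) {C γ s : ℝ≥0} (hs : s ≠ 0) (hγ : f γ ≤ C)
    (h : γ * f γ ≤ (s + 1) * C) :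
    f s ≤ (s + 1) / s * C := by
  have hs_pos : 0 < s := pos_of_ne_zero hs
  rcases le_total γ s with hγs | hsγ
  · have hone : 1 ≤ (s + 1) / s := (one_le_div₀ hs_pos).2 le_self_add
    calc f s ≤ f γ := hf hγs
      _ ≤ C := hγ
      _ = 1 * C := (one_mul C).symm
      _ ≤ (s + 1) / s * C := by gcongr
  · rw [div_mul_eq_mul_div, le_div_iff₀ hs_pos, mul_comm]
    exact (hwork hsγ).trans h

theorem stmt_8_general {ι : Type*} (f : ℝ≥0 → ℝ≥0) (hf : Antitone f)
    (hwork : Monotone fun s => s * f s)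
    (C : ℝ≥0)
    (γ : ℕ) (hγ : f γ ≤ C)
    (T : Finset ι) (hT : T.Nonempty)
    (h : (γ : ℝ≥0) * f γ ≤ ((T.card : ℝ≥0) + 1) * C) :
    f (T.card) ≤ (((T.card : ℝ≥0) + 1) / (T.card : ℝ≥0)) * C :=
  NNReal.apply_le_add_one_div_mul_of_work_le hf hwork (Nat.cast_ne_zero.2 hT.card_ne_zero) hγ h

theorem stmt_8 {ι : Type*} (f : ℝ≥0 → ℝ≥0) (hf : Antitone f)
    (hwork : Monotone fun s => s * f s)
    (C : ℝ≥0) (hC : 0 < C)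
    (γ : ℕ) (hγ : f γ ≤ C) (hγmin : ∀ q : ℕ, f q ≤ C → γ ≤ q)
    (T : Finset ι) (hT : T.Nonempty)
    (h : (γ : ℝ≥0) * f γ ≤ ((T.card : ℝ≥0) + 1) * C) :
    f (T.card) ≤ (((T.card : ℝ≥0) + 1) / (T.card : ℝ≥0)) * C :=
  stmt_8_general f hf hwork C γ hγ T hT h
end

section
/- Let G = (V,E) be a finite graph with the malleable scheduling instance of the coloring reduction: jobs j_v for v ∈ V with f_{j_v}(S) = 1 + |V| * |δ(v) \ S| on machines E. If G admits a proper coloring with k colors, then there is a feasible non-preemptive schedule (each machine processes at most one job at any time, each job runs in unison on its allocated set) with makespan at most k. -/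
theorem stmt_10 {V : Type*} [Fintype V] [DecidableEq V]
    (G : SimpleGraph V) [DecidableRel G.Adj]
    (k : ℕ) (c : V → Fin k) (hc : ∀ v w, G.Adj v w → c v ≠ c w) :
    ∃ (S : V → Finset (Sym2 V)) (t : V → ℝ),
      (∀ v, S v ⊆ G.edgeFinset) ∧
      (∀ v, 0 ≤ t v) ∧
      -- feasibility: time-overlapping jobs use disjoint machine sets
      (∀ v w, v ≠ w →
        (t v < t w + (1 + (Fintype.card V : ℝ) * ((G.incidenceFinset w) \ S w).card) ∧
         t w < t v + (1 + (Fintype.card V : ℝ) * ((G.incidenceFinset v) \ S v).card)) →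
        Disjoint (S v) (S w)) ∧
      -- makespan at most k
      (∀ v, t v + (1 + (Fintype.card V : ℝ) * ((G.incidenceFinset v) \ S v).card)
        ≤ (k : ℝ)) := by
  refine ⟨fun v => G.incidenceFinset v, fun v => (c v : ℕ), ?_, ?_, ?_, ?_⟩
  · intro v
    intro e he
    rw [SimpleGraph.mem_incidenceFinset] at he
    exact SimpleGraph.mem_edgeFinset.mpr he.1
  · intro v; positivity
  · intro v w hvw h
    simp only [Finset.sdiff_self, Finset.card_empty, Nat.cast_zero, mul_zero, add_zero] at h
    have hcc : c v = c w := by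
      have h1 : ((c v : ℕ) : ℝ) < (c w : ℕ) + 1 := h.1
      have h2 : ((c w : ℕ) : ℝ) < (c v : ℕ) + 1 := h.2
      have h1' : (c v : ℕ) < (c w : ℕ) + 1 := by exact_mod_cast h1
      have h2' : (c w : ℕ) < (c v : ℕ) + 1 := by exact_mod_cast h2
      omega
    have hadj : ¬ G.Adj v w := fun h => hc v w h hcc
    rw [Finset.disjoint_left]
    intro e hev hew
    rw [SimpleGraph.mem_incidenceFinset] at hev hew
    exact hadj ((G.adj_of_mem_incidenceSet hvw hev hew))
  · intro v
    simp only [Finset.sdiff_self, Finset.card_empty, Nat.cast_zero, mul_zero, add_zero]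
    have : (c v : ℕ) + 1 ≤ k := (c v).2
    exact_mod_cast this
end

section
/- Let G = (V,E) be a finite graph with the coloring-reduction malleable instance (jobs j_v with f_{j_v}(S) = 1 + |V| * |δ(v) \ S|). If there is a feasible schedule with makespan C ≤ |V|, then G admits a proper coloring with at most ⌊C⌋ colors. -/
theorem stmt_11 {V : Type*} [Fintype V] [DecidableEq V]
    (G : SimpleGraph V) [DecidableRel G.Adj]
    (S : V → Finset (Sym2 V)) (t : V → ℝ) (C : ℝ)
    (hS : ∀ v, S v ⊆ G.edgeFinset)
    (ht : ∀ v, 0 ≤ t v)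
    (hfeas : ∀ v w, v ≠ w →
      (t v < t w + (1 + (Fintype.card V : ℝ) * ((G.incidenceFinset w) \ S w).card) ∧
       t w < t v + (1 + (Fintype.card V : ℝ) * ((G.incidenceFinset v) \ S v).card)) →
      Disjoint (S v) (S w))
    (hmakespan : ∀ v,
      t v + (1 + (Fintype.card V : ℝ) * ((G.incidenceFinset v) \ S v).card) ≤ C)
    (hC : C ≤ (Fintype.card V : ℝ)) :
    ∃ c : V → ℕ, (∀ v, c v < Nat.floor C) ∧
      (∀ v w, G.Adj v w → c v ≠ c w) := by
  set n : ℝ := (Fintype.card V : ℝ) with hn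
  -- every job gets all its incident edges
  have hzero : ∀ v, ((G.incidenceFinset v) \ S v).card = 0 := by
    intro v
    by_contra h
    have h1 : (1 : ℝ) ≤ (((G.incidenceFinset v) \ S v).card : ℝ) := by
      exact_mod_cast Nat.one_le_iff_ne_zero.mpr h
    have hn1 : (1 : ℝ) ≤ n := by
      have : 1 ≤ Fintype.card V := Fintype.card_pos_iff.mpr ⟨v⟩
      rw [hn]; exact_mod_cast this
    have : n ≤ n * (((G.incidenceFinset v) \ S v).card : ℝ) :=
      le_mul_of_one_le_right (by linarith) h1
    have := hmakespan v
    have := ht v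
    linarith
  have hsub : ∀ v, G.incidenceFinset v ⊆ S v := by
    intro v
    have := Finset.card_eq_zero.mp (hzero v)
    intro e he
    by_contra hne
    have hmem : e ∈ (G.incidenceFinset v) \ S v := Finset.mem_sdiff.mpr ⟨he, hne⟩
    rw [this] at hmem
    exact absurd hmem (Finset.notMem_empty e)
  refine ⟨fun v => Nat.floor (t v), ?_, ?_⟩
  · intro v
    dsimp only
    have hm := hmakespan v
    rw [hzero v] at hm
    have h1 : t v + 1 ≤ C := by push_cast at hm; linarith
    have : Nat.floor (t v) + 1 ≤ Nat.floor C := by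
      have : (Nat.floor (t v) + 1 : ℕ) = Nat.floor (t v + 1) := by
        rw [Nat.floor_add_one (ht v)]
      rw [this]
      exact Nat.floor_le_floor h1
    omega
  · intro v w hadj heq
    dsimp only at heq
    have hne := hadj.ne
    have hfv : t v < t w + 1 := by
      calc t v < Nat.floor (t v) + 1 := Nat.lt_floor_add_one _
        _ = Nat.floor (t w) + 1 := by rw [heq]
        _ ≤ t w + 1 := by
            have := Nat.floor_le (ht w); linarith
    have hfw : t w < t v + 1 := by
      calc t w < Nat.floor (t w) + 1 := Nat.lt_floor_add_one _
        _ = Nat.floor (t v) + 1 := by rw [heq]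
        _ ≤ t v + 1 := by
            have := Nat.floor_le (ht v); linarith
    have hdisj := hfeas v w hne (by rw [hzero v, hzero w]; push_cast; constructor <;> linarith)
    have hev : s(v, w) ∈ S v := hsub v (by
      rw [SimpleGraph.mem_incidenceFinset]
      exact ⟨hadj, Sym2.mem_mk_left v w⟩)
    have hew : s(v, w) ∈ S w := hsub w (by
      rw [SimpleGraph.mem_incidenceFinset]
      exact ⟨hadj, Sym2.mem_mk_right v w⟩)
    exact (Finset.disjoint_left.mp hdisj hev) hew
end

section
/- Let f : ℝ≥0 → ℝ≥0 be non-increasing with non-decreasing work and let C > 0, γ := critical speed with f(γ) ≤ C. For any finite set S of machines with speeds s_i > 0 and σ(S) := Σ_{i∈S} s_i ≥ γ, setting x_i := s_i / σ(S), the following hold for each i ∈ S: (1) if f(s_i) ≤ C then f(s_i) * x_i ≤ f(σ(S)); (2) if f(s_i) > C then f(γ) * (γ / s_i) * x_i ≤ f(σ(S)). -/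
/-! Both inequalities are instances of the monotonicity of the work `s ↦ s * f s`: for `a ≤ b`,
`a * f a ≤ b * f b` rearranges to `f a * (a / b) ≤ f b`. Part (1) takes `a = s i ≤ σ(S)`; in part (2)
the factor `(γ / s i) * (s i / σ(S))` collapses to `γ / σ(S)`, and `a = γ ≤ σ(S)`. -/

open scoped NNReal

namespace NNReal

lemma mul_div_le_of_mul_le_mul {a b x y : ℝ≥0} (h : a * x ≤ b * y) : x * (a / b) ≤ y := by
  rw [← mul_div_assoc]
  exact div_le_of_le_mul₀ zero_le zero_le (by rwa [mul_comm x, mul_comm y])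

lemma div_mul_div_le_div (a b c : ℝ≥0) : a / b * (b / c) ≤ a / c := by
  rcases eq_or_ne b 0 with rfl | hb
  · simp
  · rw [div_mul_div_cancel₀ hb]

end NNReal

lemma Monotone.apply_mul_div_le_apply {f : ℝ≥0 → ℝ≥0} (hwork : Monotone fun s => s * f s)
    {a b : ℝ≥0} (hab : a ≤ b) : f a * (a / b) ≤ f b :=
  NNReal.mul_div_le_of_mul_le_mul (hwork hab)

theorem stmt_12_general {ι : Type*} (f : ℝ≥0 → ℝ≥0)
    (hwork : Monotone fun s => s * f s)
    (C : ℝ≥0)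
    (γ : ℕ)
    (S : Finset ι) (s : ι → ℝ≥0)
    (hσ : (γ : ℝ≥0) ≤ ∑ i ∈ S, s i)
    (i : ι) (hi : i ∈ S) :
    (f (s i) ≤ C → f (s i) * (s i / ∑ i ∈ S, s i) ≤ f (∑ i ∈ S, s i)) ∧
    (C < f (s i) →
      f γ * ((γ : ℝ≥0) / s i) * (s i / ∑ i ∈ S, s i) ≤ f (∑ i ∈ S, s i)) := by
  refine ⟨fun _ => hwork.apply_mul_div_le_apply (Finset.single_le_sum (fun j _ => zero_le) hi),
    fun _ => ?_⟩
  calc f γ * ((γ : ℝ≥0) / s i) * (s i / ∑ i ∈ S, s i)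
      ≤ f γ * ((γ : ℝ≥0) / ∑ i ∈ S, s i) := by
        rw [mul_assoc]
        gcongr
        exact NNReal.div_mul_div_le_div _ _ _
    _ ≤ f (∑ i ∈ S, s i) := hwork.apply_mul_div_le_apply hσ

theorem stmt_12 {ι : Type*} (f : ℝ≥0 → ℝ≥0) (hf : Antitone f)
    (hwork : Monotone fun s => s * f s)
    (C : ℝ≥0) (hC : 0 < C)
    (γ : ℕ) (hγ : f γ ≤ C) (hγmin : ∀ q : ℕ, f q ≤ C → γ ≤ q)
    (S : Finset ι) (s : ι → ℝ≥0) (hs : ∀ i ∈ S, 0 < s i)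
    (hσ : (γ : ℝ≥0) ≤ ∑ i ∈ S, s i)
    (i : ι) (hi : i ∈ S) :
    (f (s i) ≤ C → f (s i) * (s i / ∑ i ∈ S, s i) ≤ f (∑ i ∈ S, s i)) ∧
    (C < f (s i) →
      f γ * ((γ : ℝ≥0) / s i) * (s i / ∑ i ∈ S, s i) ≤ f (∑ i ∈ S, s i)) :=
  stmt_12_general f hwork C γ S s hσ i hi
end

section
/- Let f : ℝ≥0 → ℝ≥0 be non-increasing with non-decreasing work, p ≥ 1, C > 0, γ the critical speed with f(γ) ≤ C. For a finite set S of machines with speeds s_i ≥ 0, let σ_p(S) := (Σ_{i∈S} s_i^p)^{1/p} and x_i := s_i^p / σ_p(S)^p. Then: (1) if f(s_i) ≤ C, then f(s_i) * x_i ≤ f(σ_p(S)); (2) if f(s_i) > C and σ_p(S) ≥ γ, then f(γ) * (γ/s_i)^p * x_i ≤ f(σ_p(S)). -/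
/-! Since `s ↦ s * f s` is monotone and `p ≥ 1`, so is `s ↦ f s * s ^ p`. Both claims compare this
quantity at a point below `σ_p(S)` (namely `s_i`, resp. `γ`) with its value at `σ_p(S)`, and then
divide by `σ_p(S) ^ p`; in (2) the factor `(γ / s_i) ^ p` turns `s_i ^ p` into (at most) `γ ^ p`. -/

open NNReal

namespace NNReal

lemma div_mul_le_self (a b : ℝ≥0) : a / b * b ≤ a := by
  rcases eq_or_ne b 0 with rfl | hb
  · simp
  · rw [div_mul_cancel₀ a hb]

lemma div_rpow_mul_rpow_le (a b : ℝ≥0) {p : ℝ} (hp : 0 ≤ p) : (a / b) ^ p * b ^ p ≤ a ^ p := by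
  rw [← mul_rpow]
  exact rpow_le_rpow (div_mul_le_self a b) hp

lemma mul_div_le_of_mul_le {a b c d : ℝ≥0} (h : a * b ≤ c * d) : a * (b / d) ≤ c := by
  rw [← mul_div_assoc]
  exact div_le_of_le_mul h

lemma le_sum_rpow_rpow_one_div {ι : Type*} {S : Finset ι} {s : ι → ℝ≥0} {i : ι} (hi : i ∈ S)
    {p : ℝ} (hp : 0 < p) : s i ≤ (∑ j ∈ S, s j ^ p) ^ (1 / p) := by
  rw [one_div, le_rpow_inv_iff hp]
  exact Finset.single_le_sum (f := fun j => s j ^ p) (fun _ _ => zero_le) hi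

end NNReal

lemma Monotone.mul_rpow_of_monotone_self_mul {f : ℝ≥0 → ℝ≥0} (hwork : Monotone fun s => s * f s)
    {p : ℝ} (hp : 1 ≤ p) : Monotone fun s => f s * s ^ p := by
  have hsplit : ∀ s : ℝ≥0, f s * s ^ p = s * f s * s ^ (p - 1) := fun s => by
    conv_lhs => rw [← add_sub_cancel 1 p, NNReal.rpow_add' (by linarith), NNReal.rpow_one]
    ring
  simp only [hsplit]
  exact hwork.mul' (NNReal.monotone_rpow_of_nonneg (by linarith))

theorem stmt_13_general {ι : Type*} (f : ℝ≥0 → ℝ≥0)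
    (hwork : Monotone fun s => s * f s)
    (p : ℝ) (hp : 1 ≤ p)
    (C : ℝ≥0)
    (γ : ℕ)
    (S : Finset ι) (s : ι → ℝ≥0)
    (i : ι) (hi : i ∈ S) :
    (f (s i) ≤ C →
      f (s i) * (s i ^ p / ((∑ i ∈ S, s i ^ p) ^ (1 / p)) ^ p)
        ≤ f ((∑ i ∈ S, s i ^ p) ^ (1 / p))) ∧
    (C < f (s i) → (γ : ℝ≥0) ≤ (∑ i ∈ S, s i ^ p) ^ (1 / p) →
      f γ * ((γ : ℝ≥0) / s i) ^ p * (s i ^ p / ((∑ i ∈ S, s i ^ p) ^ (1 / p)) ^ p)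
        ≤ f ((∑ i ∈ S, s i ^ p) ^ (1 / p))) := by
  have hmono := hwork.mul_rpow_of_monotone_self_mul hp
  set σ := (∑ j ∈ S, s j ^ p) ^ (1 / p)
  have hsσ : s i ≤ σ := le_sum_rpow_rpow_one_div hi (by linarith)
  refine ⟨fun _ => mul_div_le_of_mul_le (hmono hsσ), fun _ hγσ => mul_div_le_of_mul_le ?_⟩
  calc f γ * ((γ : ℝ≥0) / s i) ^ p * s i ^ p = f γ * (((γ : ℝ≥0) / s i) ^ p * s i ^ p) :=
        mul_assoc _ _ _
    _ ≤ f γ * (γ : ℝ≥0) ^ p := by gcongr; exact div_rpow_mul_rpow_le _ _ (by linarith)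
    _ ≤ f σ * σ ^ p := hmono hγσ

theorem stmt_13 {ι : Type*} (f : ℝ≥0 → ℝ≥0) (hf : Antitone f)
    (hwork : Monotone fun s => s * f s)
    (p : ℝ) (hp : 1 ≤ p)
    (C : ℝ≥0) (hC : 0 < C)
    (γ : ℕ) (hγ : f γ ≤ C) (hγmin : ∀ q : ℕ, f q ≤ C → γ ≤ q)
    (S : Finset ι) (s : ι → ℝ≥0)
    (i : ι) (hi : i ∈ S) :
    (f (s i) ≤ C →
      f (s i) * (s i ^ p / ((∑ i ∈ S, s i ^ p) ^ (1 / p)) ^ p)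
        ≤ f ((∑ i ∈ S, s i ^ p) ^ (1 / p))) ∧
    (C < f (s i) → (γ : ℝ≥0) ≤ (∑ i ∈ S, s i ^ p) ^ (1 / p) →
      f γ * ((γ : ℝ≥0) / s i) ^ p * (s i ^ p / ((∑ i ∈ S, s i ^ p) ^ (1 / p)) ^ p)
        ≤ f ((∑ i ∈ S, s i ^ p) ^ (1 / p))) :=
  stmt_13_general f hwork p hp C γ S s i hi
end

section
/- Let f : ℝ≥0 → ℝ≥0 be non-increasing with non-decreasing work, p ≥ 1, C > 0, β ∈ (0,1), γ the critical speed with f(γ) ≤ C and γ > 0. Suppose a finite set T of machines with speeds s_i > 0 satisfies f(γ) * (γ / s_i)^p * x_i ≤ C for all i ∈ T, where x_i ≥ 0 and Σ_{i∈T} x_i > 1 - β. Then σ_p(T) := (Σ_{i∈T} s_i^p)^{1/p} ≥ ((1-β) * f(γ)/C)^{1/p} * γ, and consequently f(σ_p(T)) ≤ (1/(1-β))^{1/p} * C. -/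
/-!
Summing the per-machine load bounds `f γ · γ^p · x_i ≤ C · s_i^p` over `T` and using
`∑ x_i > 1 - β` gives `(1 - β) · f γ · γ^p ≤ C · σ_p(T)^p`, i.e. `σ_p(T) ≥ c · γ` with
`c = ((1 - β) f γ / C)^{1/p}`. If `σ_p(T) ≥ γ`, monotonicity of `f` already gives `f σ_p(T) ≤ C`.
Otherwise monotonicity of the work `s ↦ s f(s)` gives `f σ_p(T) ≤ (γ / σ_p(T)) f γ ≤ f γ / c`,
and `f γ / c = f γ (C / f γ)^{1/p} (1 - β)^{-1/p} ≤ C (1 - β)^{-1/p}` because `C / f γ ≥ 1` and `p ≥ 1`.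
-/

open NNReal

theorem sum_mul_rpow_le_of_forall_mul_div_rpow_mul_le {ι : Type*} {T : Finset ι}
    {s x : ι → ℝ≥0} {K g C : ℝ≥0} {p : ℝ} (hs : ∀ i ∈ T, 0 < s i)
    (hload : ∀ i ∈ T, K * (g / s i) ^ p * x i ≤ C) :
    K * g ^ p * ∑ i ∈ T, x i ≤ C * ∑ i ∈ T, s i ^ p := by
  rw [Finset.mul_sum, Finset.mul_sum]
  refine Finset.sum_le_sum fun i hi => ?_
  have hsp : 0 < s i ^ p := NNReal.rpow_pos (hs i hi)
  have h := hload i hi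
  rwa [NNReal.div_rpow, mul_div_assoc', div_mul_eq_mul_div, div_le_iff₀ hsp] at h

theorem rpow_one_div_mul_le_of_mul_rpow_le {p : ℝ} (hp : 0 < p) {a g C S : ℝ≥0}
    (h : a * g ^ p ≤ C * S) : (a / C) ^ (1 / p) * g ≤ S ^ (1 / p) := by
  have hg : (a / C) ^ (1 / p) * g = (a / C * g ^ p) ^ (1 / p) := by
    rw [NNReal.mul_rpow, ← NNReal.rpow_mul, mul_one_div_cancel hp.ne', NNReal.rpow_one]
  rw [hg]
  refine NNReal.rpow_le_rpow ?_ (by positivity)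
  rw [div_mul_eq_mul_div]
  exact div_le_of_le_mul₀ zero_le zero_le (by rwa [mul_comm S])

theorem apply_le_div_mul_apply {f : ℝ≥0 → ℝ≥0} (hwork : Monotone fun s => s * f s)
    {a b : ℝ≥0} (ha : 0 < a) (hab : a ≤ b) : f a ≤ b / a * f b := by
  rw [div_mul_eq_mul_div, le_div_iff₀ ha, mul_comm]
  exact hwork hab

theorem mul_rpow_one_div_div_le {p : ℝ} (hp : 1 ≤ p) {y C : ℝ≥0} (h : y ≤ C) :
    y * (C / y) ^ (1 / p) ≤ C := by
  rcases eq_or_ne y 0 with rfl | hy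
  · simp
  have hCy : 1 ≤ C / y := (one_le_div₀ (pos_iff_ne_zero.2 hy)).2 h
  calc y * (C / y) ^ (1 / p) ≤ y * (C / y) ^ (1 : ℝ) := by
        gcongr
        exact (div_le_one (by positivity)).2 hp
    _ = C := by rw [NNReal.rpow_one, mul_div_cancel₀ _ hy]

theorem apply_le_of_rpow_one_div_mul_le {f : ℝ≥0 → ℝ≥0} (hf : Antitone f)
    (hwork : Monotone fun s => s * f s) {p : ℝ} (hp : 1 ≤ p) {C t g σ : ℝ≥0}
    (hg : f g ≤ C) (ht0 : 0 < t) (ht1 : t ≤ 1) (hσ0 : 0 < σ)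
    (hσ : (t * f g / C) ^ (1 / p) * g ≤ σ) :
    f σ ≤ (1 / t) ^ (1 / p) * C := by
  have hA : 1 ≤ (1 / t) ^ (1 / p) :=
    NNReal.one_le_rpow ((one_le_div₀ ht0).2 ht1) (by positivity)
  rcases le_or_gt g σ with hgσ | hσg
  · calc f σ ≤ C := (hf hgσ).trans hg
      _ ≤ (1 / t) ^ (1 / p) * C := le_mul_of_one_le_left zero_le hA
  rcases eq_or_ne (f g) 0 with hfg | hfg
  · exact (apply_le_div_mul_apply hwork hσ0 hσg.le).trans (by simp [hfg])
  have hC : 0 < C := (pos_iff_ne_zero.2 hfg).trans_le hg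
  set c := (t * f g / C) ^ (1 / p)
  have hc : 0 < c := NNReal.rpow_pos (by positivity)
  have hg0 : 0 < g := hσ0.trans hσg
  have hc_inv : c⁻¹ = (C / f g) ^ (1 / p) * (1 / t) ^ (1 / p) := by
    rw [← NNReal.inv_rpow, ← NNReal.mul_rpow, inv_div, div_mul_div_comm, mul_one, mul_comm t]
  calc f σ ≤ g / σ * f g := apply_le_div_mul_apply hwork hσ0 hσg.le
    _ ≤ g / (c * g) * f g := by gcongr
    _ = f g * c⁻¹ := by rw [div_mul_cancel_right₀ hg0.ne', mul_comm]
    _ = f g * (C / f g) ^ (1 / p) * (1 / t) ^ (1 / p) := by rw [hc_inv, mul_assoc]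
    _ ≤ (1 / t) ^ (1 / p) * C := by
      rw [mul_comm _ C]
      gcongr
      exact mul_rpow_one_div_div_le hp hg

theorem stmt_14_general {ι : Type*} (f : ℝ≥0 → ℝ≥0) (hf : Antitone f)
    (hwork : Monotone fun s => s * f s)
    (p : ℝ) (hp : 1 ≤ p)
    (C : ℝ≥0)
    (β : ℝ≥0) (hβ1 : β < 1)
    (γ : ℕ) (hγ : f (γ : ℝ≥0) ≤ C)
    (T : Finset ι) (s x : ι → ℝ≥0) (hs : ∀ i ∈ T, 0 < s i)
    (hload : ∀ i ∈ T, f γ * ((γ : ℝ≥0) / s i) ^ p * x i ≤ C)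
    (hx : 1 - β < ∑ i ∈ T, x i) :
    ((1 - β) * f γ / C) ^ (1 / p) * (γ : ℝ≥0) ≤ (∑ i ∈ T, s i ^ p) ^ (1 / p) ∧
    f ((∑ i ∈ T, s i ^ p) ^ (1 / p)) ≤ (1 / (1 - β)) ^ (1 / p) * C := by
  have hT : T.Nonempty := Finset.nonempty_of_sum_ne_zero (pos_of_gt hx).ne'
  have hσ0 : 0 < (∑ i ∈ T, s i ^ p) ^ (1 / p) :=
    NNReal.rpow_pos (Finset.sum_pos (fun i hi => NNReal.rpow_pos (hs i hi)) hT)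
  have hsum : (1 - β) * f γ * (γ : ℝ≥0) ^ p ≤ C * ∑ i ∈ T, s i ^ p := by
    calc (1 - β) * f γ * (γ : ℝ≥0) ^ p = f γ * (γ : ℝ≥0) ^ p * (1 - β) := by ring
      _ ≤ f γ * (γ : ℝ≥0) ^ p * ∑ i ∈ T, x i := by gcongr
      _ ≤ C * ∑ i ∈ T, s i ^ p := sum_mul_rpow_le_of_forall_mul_div_rpow_mul_le hs hload
  have hσ := rpow_one_div_mul_le_of_mul_rpow_le (by linarith) hsum
  exact ⟨hσ, apply_le_of_rpow_one_div_mul_le hf hwork hp hγ (tsub_pos_of_lt hβ1) tsub_le_self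
    hσ0 hσ⟩

theorem stmt_14 {ι : Type*} (f : ℝ≥0 → ℝ≥0) (hf : Antitone f)
    (hwork : Monotone fun s => s * f s)
    (p : ℝ) (hp : 1 ≤ p)
    (C : ℝ≥0) (hC : 0 < C)
    (β : ℝ≥0) (hβ0 : 0 < β) (hβ1 : β < 1)
    (γ : ℕ) (hγ0 : 0 < γ) (hγ : f (γ : ℝ≥0) ≤ C)
    (hγmin : ∀ q : ℕ, f q ≤ C → γ ≤ q)
    (T : Finset ι) (s x : ι → ℝ≥0) (hs : ∀ i ∈ T, 0 < s i)
    (hload : ∀ i ∈ T, f γ * ((γ : ℝ≥0) / s i) ^ p * x i ≤ C)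
    (hx : 1 - β < ∑ i ∈ T, x i) :
    ((1 - β) * f γ / C) ^ (1 / p) * (γ : ℝ≥0) ≤ (∑ i ∈ T, s i ^ p) ^ (1 / p) ∧
    f ((∑ i ∈ T, s i ^ p) ^ (1 / p)) ≤ (1 / (1 - β)) ^ (1 / p) * C :=
  stmt_14_general f hf hwork p hp C β hβ1 γ hγ T s x hs hload hx
end

section
/- Consider k identical jobs with processing time function f(s) = max(2/s, 1), each job j having a dedicated machine i_j plus a shared pool P of k-1 machines available to all jobs, with all feasible machine-job speeds equal to 1 (restricted assignment). Then every feasible schedule (jobs non-preemptive, running in unison on disjoint machine sets at overlapping times) has makespan at least 2. -/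
theorem stmt_15 (k : ℕ) (hk : 1 ≤ k)
    (S : Fin k → Finset (Fin k ⊕ Fin (k - 1))) (t : Fin k → ℝ)
    (hfeas : ∀ j, S j ⊆ insert (Sum.inl j) (Finset.univ.image Sum.inr))
    (hne : ∀ j, (S j).Nonempty)
    (ht : ∀ j, 0 ≤ t j)
    (hdisj : ∀ j j', j ≠ j' →
      (t j < t j' + max (2 / ((S j').card : ℝ)) 1 ∧
       t j' < t j + max (2 / ((S j).card : ℝ)) 1) →
      Disjoint (S j) (S j')) :
    ∃ j, 2 ≤ t j + max (2 / ((S j).card : ℝ)) 1 := by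
  by_contra hcon
  push_neg at hcon
  -- every job has at least 2 machines
  have hcard : ∀ j, 1 < (S j).card := by
    intro j
    by_contra h
    push_neg at h
    have h1 : (S j).card = 1 := le_antisymm h (Finset.card_pos.mpr (hne j))
    have := hcon j
    rw [h1] at this
    simp at this
    have := ht j
    linarith [le_max_left (2 / (1:ℝ)) 1]
  -- each job uses a pool machine
  have hpool : ∀ j, ∃ p : Fin (k-1), Sum.inr p ∈ S j := by
    intro j
    obtain ⟨b, hb, hbne⟩ := Finset.exists_mem_ne (hcard j) (Sum.inl j)
    have := hfeas j hb
    rw [Finset.mem_insert] at this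
    rcases this with h | h
    · exact absurd h hbne
    · obtain ⟨p, _, hp⟩ := Finset.mem_image.mp h
      exact ⟨p, hp ▸ hb⟩
  choose g hg using hpool
  -- starts are before 1, processing ≥ 1, so all jobs overlap
  have hmax : ∀ j, (1:ℝ) ≤ max (2 / ((S j).card : ℝ)) 1 := fun j => le_max_right _ _
  have htlt : ∀ j, t j < 1 := by
    intro j
    have := hcon j
    have := hmax j
    linarith
  have hginj : Function.Injective g := by
    intro j j' hgeq
    by_contra hne'
    have hov : t j < t j' + max (2 / ((S j').card : ℝ)) 1 ∧
        t j' < t j + max (2 / ((S j).card : ℝ)) 1 := by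
      constructor
      · have := ht j'; have := hmax j'; have := htlt j; linarith
      · have := ht j; have := hmax j; have := htlt j'; linarith
    have hd := hdisj j j' hne' hov
    exact (Finset.disjoint_left.mp hd (hg j)) (hgeq ▸ hg j')
  have := Fintype.card_le_of_injective g hginj
  simp at this
  omega
end

section
/- In the restricted-assignment integrality gap instance (k identical jobs with f(s) = max(2/s,1), dedicated machines i_j, a pool P of k-1 common machines, target C = 2k/(2k-1)), the fractional assignment x_{i_j,j} = k/(2k-1) and x_{i,j} = 1/(2k-1) for all i ∈ P satisfies: Σ_i x_{i,j} = 1 for each job j, and for every machine the total fractional load Σ_j 2 x_{i,j} equals C. Consequently the ratio of the optimal integral makespan (which is 2) to C tends to 2 as k → ∞. -/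
open Filter Topology

/-- Job `j` sits with weight `a` on its dedicated machine `inl j` and with weight `b` on each of
the `m` pool machines. -/
def gapAssignment (n m : ℕ) (a b : ℝ) : Fin n ⊕ Fin m → Fin n → ℝ :=
  fun i j => Sum.elim (fun j' : Fin n => if j' = j then a else 0) (fun _ : Fin m => b) i

section gapAssignment

variable {n m : ℕ} {a b : ℝ}

theorem gapAssignment_sum_machines (j : Fin n) :
    ∑ i, gapAssignment n m a b i j = a + m * b := by
  simp [gapAssignment, Fintype.sum_sum_type]

theorem gapAssignment_sum_jobs_inl (j' : Fin n) :
    ∑ j, gapAssignment n m a b (Sum.inl j') j = a := by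
  simp [gapAssignment]

theorem gapAssignment_sum_jobs_inr (p : Fin m) :
    ∑ j, gapAssignment n m a b (Sum.inr p) j = n * b := by
  simp [gapAssignment]

end gapAssignment

theorem div_add_natCast_pred_mul_one_div {k : ℕ} (hk : 1 ≤ k) :
    (k : ℝ) / (2 * k - 1) + ((k - 1 : ℕ) : ℝ) * (1 / (2 * k - 1)) = 1 := by
  have hk' : (1 : ℝ) ≤ k := by exact_mod_cast hk
  have : (2 * (k : ℝ) - 1) ≠ 0 := by linarith
  rw [Nat.cast_sub hk, Nat.cast_one, mul_one_div, ← add_div, div_eq_one_iff_eq this]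
  ring

theorem tendsto_two_div_two_mul_div_two_mul_sub_one :
    Tendsto (fun k : ℕ => 2 / (2 * (k : ℝ) / (2 * k - 1))) atTop (𝓝 2) := by
  have h : Tendsto (fun k : ℕ => 2 - 1 / (k : ℝ)) atTop (𝓝 2) := by
    simpa using tendsto_const_nhds.sub (tendsto_one_div_atTop_nhds_zero_nat (𝕜 := ℝ))
  refine h.congr' ?_
  filter_upwards [eventually_ge_atTop 1] with k hk
  have hk' : (1 : ℝ) ≤ k := by exact_mod_cast hk
  have : (2 * (k : ℝ) - 1) ≠ 0 := by linarith
  field_simp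

theorem stmt_16 (k : ℕ) (hk : 1 ≤ k)
    (x : (Fin k ⊕ Fin (k - 1)) → Fin k → ℝ)
    (hx : x = fun i j => Sum.elim
      (fun j' : Fin k => if j' = j then (k : ℝ) / (2 * k - 1) else 0)
      (fun _ : Fin (k - 1) => 1 / (2 * (k : ℝ) - 1)) i) :
    (∀ j : Fin k, ∑ i : Fin k ⊕ Fin (k - 1), x i j = 1) ∧
    (∀ i : Fin k ⊕ Fin (k - 1),
      ∑ j : Fin k, 2 * x i j = 2 * (k : ℝ) / (2 * k - 1)) ∧
    Tendsto (fun k : ℕ => 2 / (2 * (k : ℝ) / (2 * k - 1))) atTop (nhds 2) := by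
  change x = gapAssignment k (k - 1) _ _ at hx
  subst hx
  refine ⟨fun j => ?_, fun i => ?_, tendsto_two_div_two_mul_div_two_mul_sub_one⟩
  · rw [gapAssignment_sum_machines, div_add_natCast_pred_mul_one_div hk]
  · rw [← Finset.mul_sum]
    rcases i with j' | p
    · rw [gapAssignment_sum_jobs_inl, mul_div_assoc]
    · rw [gapAssignment_sum_jobs_inr]
      ring
end

section
/- For the function h(β) := e^{1/β - 1} / (β (e^{1/β - 1} - 1)) on (0,1), the infimum inf_{β∈(0,1)} h(β) is attained and is strictly less than 2e/(e-1); in particular there exists β ∈ (0,1) with h(β) < 3.1462, while 2e/(e-1) > 3.1639. -/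
open Set

-- lower bound on exp(682/4659) via Taylor
lemma exp_s_lb : (1.157636 : ℝ) ≤ Real.exp (682/4659) := by
  have h := Real.exp_bound (x := (682/4659 : ℝ)) (by rw [abs_of_nonneg] <;> norm_num) (n := 8) (by norm_num)
  have h2 := abs_le.1 h
  have hsum : (1.157637:ℝ) ≤ ∑ i ∈ Finset.range 8, ((682:ℝ)/4659) ^ i / (i.factorial : ℝ) := by
    simp [Finset.sum_range_succ]
    norm_num [Nat.factorial]
  have herr : |(682:ℝ)/4659| ^ 8 * ((Nat.succ 8 : ℝ) / ((Nat.factorial 8 : ℝ) * 8)) ≤ 0.000001 := by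
    rw [abs_of_nonneg (by norm_num)]
    norm_num [Nat.factorial]
  nlinarith [h2.1, h2.2]

lemma exp_t_lb : (3.14678 : ℝ) < Real.exp (5341/4659) := by
  have : (5341:ℝ)/4659 = 1 + 682/4659 := by norm_num
  rw [this, Real.exp_add]
  have h1 := Real.exp_one_gt_d9
  have h2 := exp_s_lb
  nlinarith [Real.exp_pos (682/4659 : ℝ)]

theorem stmt_18 (h : ℝ → ℝ)
    (hdef : ∀ β, h β =
      Real.exp (1 / β - 1) / (β * (Real.exp (1 / β - 1) - 1))) :
    (∃ β₀ ∈ Ioo (0:ℝ) 1, (∀ β ∈ Ioo (0:ℝ) 1, h β₀ ≤ h β) ∧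
      h β₀ < 2 * Real.exp 1 / (Real.exp 1 - 1)) ∧
    (∃ β ∈ Ioo (0:ℝ) 1, h β < 3.1462) ∧
    3.1639 < 2 * Real.exp 1 / (Real.exp 1 - 1) := by
  have hE : ∀ β ∈ Ioo (0:ℝ) 1, 1 < Real.exp (1/β - 1) := by
    intro β hβ
    rw [Real.one_lt_exp_iff]
    have h1 : 1 < 1/β := (one_lt_div hβ.1).mpr hβ.2
    linarith
  have hden : ∀ β ∈ Ioo (0:ℝ) 1, 0 < β * (Real.exp (1/β - 1) - 1) := by
    intro β hβ
    exact mul_pos hβ.1 (sub_pos.2 (hE β hβ))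
  have hK : ∀ β ∈ Icc (1/4:ℝ) (5/6), β ∈ Ioo (0:ℝ) 1 := by
    intro β hβ
    exact ⟨by linarith [hβ.1], by linarith [hβ.2]⟩
  -- continuity on the compact interval
  have hcont : ContinuousOn h (Icc (1/4:ℝ) (5/6)) := by
    have heq : h = fun β => Real.exp (1/β - 1) / (β * (Real.exp (1/β - 1) - 1)) :=
      funext hdef
    rw [heq]
    have hne : ∀ β ∈ Icc (1/4:ℝ) (5/6), β ≠ 0 := fun β hβ => ne_of_gt (hK β hβ).1
    have c1 : ContinuousOn (fun β : ℝ => Real.exp (1/β - 1)) (Icc (1/4:ℝ) (5/6)) :=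
      Real.continuous_exp.comp_continuousOn
        ((continuousOn_const.div continuousOn_id hne).sub continuousOn_const)
    exact c1.div (continuousOn_id.mul (c1.sub continuousOn_const))
      (fun β hβ => ne_of_gt (hden β (hK β hβ)))
  obtain ⟨β₀, hβ₀K, hmin⟩ := isCompact_Icc.exists_isMinOn
    (⟨1/2, by norm_num⟩ : (Icc (1/4:ℝ) (5/6)).Nonempty) hcont
  have hmin' : ∀ β ∈ Icc (1/4:ℝ) (5/6), h β₀ ≤ h β := fun β hβ => hmin hβ
  -- the witness β₁
  have hβ₁K : (4659/10000 : ℝ) ∈ Icc (1/4:ℝ) (5/6) := by norm_num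
  have hβ₁lt : h (4659/10000 : ℝ) < 3.1462 := by
    rw [hdef]
    have e1 : 1/((4659:ℝ)/10000) - 1 = 5341/4659 := by norm_num
    rw [e1]
    have hE1 := exp_t_lb
    rw [div_lt_iff₀ (by nlinarith)]
    nlinarith
  have key : h β₀ < 3.1462 := lt_of_le_of_lt (hmin' _ hβ₁K) hβ₁lt
  -- lower bound outside the compact interval
  have hout : ∀ β ∈ Ioo (0:ℝ) 1, β ∉ Icc (1/4:ℝ) (5/6) → 4 ≤ h β := by
    intro β hβ hn
    rw [hdef]
    have hE' := hE β hβ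
    have hd := hden β hβ
    rw [le_div_iff₀ hd]
    rcases lt_or_ge β (1/4:ℝ) with hlt | hge
    · -- β < 1/4
      nlinarith [hβ.1]
    · -- β > 5/6
      have hgt : (5/6:ℝ) < β := by
        by_contra hle
        push_neg at hle
        exact hn ⟨hge, hle⟩
      set t := 1/β - 1 with ht
      clear_value t
      have ht0 : 0 < t := by
        have h1 : 1 < 1/β := (one_lt_div hβ.1).mpr hβ.2
        rw [ht]; linarith
      have ht5 : t < 1/5 := by
        have h1 : 1/β < 6/5 := by
          rw [div_lt_div_iff₀ hβ.1 (by norm_num)]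
          linarith
        rw [ht]; linarith
      have hkey : (1 - t) * Real.exp t ≤ 1 := by
        have h1 := Real.add_one_le_exp (-t)
        have h2 : Real.exp (-t) = (Real.exp t)⁻¹ := Real.exp_neg t
        rw [h2] at h1
        have h3 := Real.exp_pos t
        calc (1 - t) * Real.exp t ≤ (Real.exp t)⁻¹ * Real.exp t := by
              apply mul_le_mul_of_nonneg_right _ h3.le
              linarith
          _ = 1 := inv_mul_cancel₀ (ne_of_gt h3)
      have hexpand : (1 - t) * Real.exp t = Real.exp t - t * Real.exp t := by ring
      have h45 : (4/5:ℝ) ≤ 1 - t := by linarith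
      have h46 : (4/5:ℝ) * Real.exp t ≤ (1 - t) * Real.exp t :=
        mul_le_mul_of_nonneg_right h45 (Real.exp_pos t).le
      have hE54 : Real.exp t ≤ 5/4 := by linarith
      have h2 : t * Real.exp t ≤ (1/5) * Real.exp t :=
        mul_le_mul_of_nonneg_right ht5.le (Real.exp_pos t).le
      have hEm1 : Real.exp t - 1 ≤ 1/4 := by linarith
      nlinarith [hβ.2, sub_pos.2 hE']
  refine ⟨⟨β₀, hK β₀ hβ₀K, ?_, ?_⟩, ⟨4659/10000, hK _ hβ₁K, hβ₁lt⟩, ?_⟩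
  · intro β hβ
    by_cases hc : β ∈ Icc (1/4:ℝ) (5/6)
    · exact hmin' β hc
    · linarith [hout β hβ hc]
  · have h3 : (3.1639:ℝ) < 2 * Real.exp 1 / (Real.exp 1 - 1) := by
      rw [lt_div_iff₀ (by nlinarith [Real.exp_one_gt_d9])]
      nlinarith [Real.exp_one_lt_d9]
    linarith
  · rw [lt_div_iff₀ (by nlinarith [Real.exp_one_gt_d9])]
    nlinarith [Real.exp_one_lt_d9]
end

section
/- Let f : ℝ≥0 → ℝ≥0 be non-increasing with non-decreasing work, C > 0, γ ≥ 3 an integer critical speed with f(γ) ≤ C, and suppose f(1) ≤ γ·f(γ), f(2) ≤ (3/2)·C, and γ·f(γ)·x_p ≤ C for some x_p ∈ [0,1]. Let ℓ_1, ℓ_2 ≥ 0 and x_1 ≥ x_2 ≥ 0 satisfy ℓ_m + γ f(γ) x_m ≤ C for m ∈ {1,2} and x_1 + x_2 = 1 - x_p. Then min( f(1) + ℓ_1, f(1) + ℓ_2, f(2) + max(ℓ_1, ℓ_2) ) ≤ (9/4)·C. -/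
open scoped NNReal

theorem stmt_19 (f : ℝ≥0 → ℝ≥0) (hf : Antitone f)
    (hwork : Monotone fun s => s * f s)
    (C : ℝ≥0) (hC : 0 < C)
    (γ : ℕ) (hγ3 : 3 ≤ γ) (hγC : f γ ≤ C)
    (h1 : f 1 ≤ (γ : ℝ≥0) * f γ) (h2 : f 2 ≤ 3 / 2 * C)
    (xp x1 x2 : ℝ≥0) (hxp1 : xp ≤ 1)
    (hxpC : (γ : ℝ≥0) * f γ * xp ≤ C)
    (ℓ1 ℓ2 : ℝ≥0) (hx12 : x2 ≤ x1)
    (hl1 : ℓ1 + (γ : ℝ≥0) * f γ * x1 ≤ C)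
    (hl2 : ℓ2 + (γ : ℝ≥0) * f γ * x2 ≤ C)
    (hsum : x1 + x2 = 1 - xp) :
    min (f 1 + ℓ1) (min (f 1 + ℓ2) (f 2 + max ℓ1 ℓ2)) ≤ 9 / 4 * C := by
  rw [← NNReal.coe_le_coe]
  have hsum' : (x1 : ℝ) + x2 = 1 - xp := by
    rw [← NNReal.coe_add, hsum, NNReal.coe_sub hxp1, NNReal.coe_one]
  have hl1' : (ℓ1 : ℝ) + (γ : ℝ) * (f γ : ℝ) * x1 ≤ C := by exact_mod_cast hl1
  have hl2' : (ℓ2 : ℝ) + (γ : ℝ) * (f γ : ℝ) * x2 ≤ C := by exact_mod_cast hl2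
  have h1' : (f 1 : ℝ) ≤ (γ : ℝ) * (f γ : ℝ) := by exact_mod_cast h1
  have h2' : (f 2 : ℝ) ≤ 3 / 2 * C := by exact_mod_cast h2
  have hxpC' : (γ : ℝ) * (f γ : ℝ) * xp ≤ C := by exact_mod_cast hxpC
  have hx12' : (x2 : ℝ) ≤ x1 := by exact_mod_cast hx12
  have hg0 : (0 : ℝ) ≤ (γ : ℝ) * (f γ : ℝ) := by positivity
  push_cast [NNReal.coe_min, NNReal.coe_max]
  have hmax : max (ℓ1 : ℝ) (ℓ2 : ℝ) ≤ (C : ℝ) - (γ : ℝ) * (f γ : ℝ) * x2 := by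
    apply max_le
    · nlinarith
    · linarith
  calc min ((f 1 : ℝ) + ℓ1) (min ((f 1 : ℝ) + ℓ2) ((f 2 : ℝ) + max (ℓ1 : ℝ) ℓ2))
      ≤ min ((f 1 : ℝ) + ℓ1) ((f 2 : ℝ) + max (ℓ1 : ℝ) ℓ2) :=
        min_le_min le_rfl (min_le_right _ _)
    _ ≤ (((f 1 : ℝ) + ℓ1) + ((f 2 : ℝ) + max (ℓ1 : ℝ) ℓ2)) / 2 := by
        rcases le_total ((f 1 : ℝ) + ℓ1) ((f 2 : ℝ) + max (ℓ1 : ℝ) ℓ2) with h | h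
        · rw [min_eq_left h]; linarith
        · rw [min_eq_right h]; linarith
    _ ≤ 9 / 4 * C := by nlinarith
end
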